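/- Let M = (W, ≤, N, V) be a coherent intuitionistic neighbourhood model, s ∈ W, and M_s^{ur} its unravelling from s. Then for all unravelling paths w⃗ ∈ W_s^{ur} and all L-formulas φ: M_s^{ur}, w⃗ ⊩ φ if and only if M, last(w⃗) ⊩ φ. -/

import Mathlib

/-
Common formalisation of the syntax and semantics of the intuitionistic
monotone modal logic IM, its generalised Hilbert calculi, intuitionistic
neighbourhood models, IFOM-structures, and related constructions.
-/

namespace IMPaper

/-- Formulas of the monotone modal language L. -/
inductive Formula : Type
  | prop : ℕ → Formula
  | bot  : Formula
  | and  : Formula → Formula → Formula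
  | or   : Formula → Formula → Formula
  | imp  : Formula → Formula → Formula
  | box  : Formula → Formula
  | dia  : Formula → Formula
deriving DecidableEq

/-- Negation: ¬φ abbreviates φ → ⊥. -/
def Formula.neg (φ : Formula) : Formula := φ.imp .bot

/-- Top: ⊤ abbreviates ⊥ → ⊥. -/
def Formula.top : Formula := Formula.bot.imp .bot

/-- Substitution of formulas for proposition letters. -/
def Formula.subst (σ : ℕ → Formula) : Formula → Formula
  | .prop i   => σ i
  | .bot      => .bot
  | .and φ ψ  => .and (φ.subst σ) (ψ.subst σ)
  | .or φ ψ   => .or (φ.subst σ) (ψ.subst σ)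
  | .imp φ ψ  => .imp (φ.subst σ) (ψ.subst σ)
  | .box φ    => .box (φ.subst σ)
  | .dia φ    => .dia (φ.subst σ)

private def pp0 : Formula := .prop 0
private def pp1 : Formula := .prop 1
private def pp2 : Formula := .prop 2

/-- A standard axiomatisation of intuitionistic propositional logic. -/
def IpcAx : Set Formula :=
  { Formula.imp pp0 (.imp pp1 pp0),
    Formula.imp (.imp pp0 (.imp pp1 pp2)) (.imp (.imp pp0 pp1) (.imp pp0 pp2)),
    Formula.imp (.and pp0 pp1) pp0,
    Formula.imp (.and pp0 pp1) pp1,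
    Formula.imp pp0 (.imp pp1 (.and pp0 pp1)),
    Formula.imp pp0 (.or pp0 pp1),
    Formula.imp pp1 (.or pp0 pp1),
    Formula.imp (.imp pp0 pp2) (.imp (.imp pp1 pp2) (.imp (.or pp0 pp1) pp2)),
    Formula.imp .bot pp0 }

/-- All substitution instances of a set of formulas. -/
def Instances (Ax : Set Formula) : Set Formula :=
  {φ | ∃ ψ ∈ Ax, ∃ σ, φ = ψ.subst σ}

/-- 𝒜x: all substitution instances of Ax together with all substitution
instances of the axioms of intuitionistic propositional logic. -/
def ScrAx (Ax : Set Formula) : Set Formula := Instances Ax ∪ Instances IpcAx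

/-- The generalised Hilbert calculus GHC(Ax). -/
inductive GHC (Ax : Set Formula) : Set Formula → Formula → Prop
  | el {Γ : Set Formula} {φ : Formula} : φ ∈ Γ → GHC Ax Γ φ
  | ax {Γ : Set Formula} {φ : Formula} : φ ∈ ScrAx Ax → GHC Ax Γ φ
  | mp {Γ : Set Formula} {φ ψ : Formula} :
      GHC Ax Γ φ → GHC Ax Γ (φ.imp ψ) → GHC Ax Γ ψ
  | monBox {Γ : Set Formula} {φ ψ : Formula} :
      GHC Ax ∅ (φ.imp ψ) → GHC Ax Γ ((Formula.box φ).imp (Formula.box ψ))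
  | monDia {Γ : Set Formula} {φ ψ : Formula} :
      GHC Ax ∅ (φ.imp ψ) → GHC Ax Γ ((Formula.dia φ).imp (Formula.dia ψ))

/-- The axioms (neg_a) and (I_◇) of the calculus IMCalc. -/
def IMAx : Set Formula :=
  { Formula.imp ((Formula.box pp0).and (Formula.dia pp0.neg)) .bot,
    Formula.imp ((Formula.box Formula.top).imp (Formula.dia pp0)) (Formula.dia pp0) }

/-- Derivability in the calculus IMCalc = GHC({(□p ∧ ◇¬p) → ⊥, (□⊤ → ◇p) → ◇p}). -/
def IMC : Set Formula → Formula → Prop := GHC IMAx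

/-- An intuitionistic neighbourhood: a partial function W ⇀ 𝒫(W), encoded as a
domain together with a (total) value function whose values matter on the domain. -/
structure Nbhd (W : Type) where
  dom : Set W
  val : W → Set W

/-- The data of an intuitionistic neighbourhood model. -/
structure INStruct (W : Type) where
  le : W → W → Prop
  N : Set (Nbhd W)
  V : ℕ → Set W

variable {W W' : Type}

/-- A set is upward closed w.r.t. the order of the structure. -/
def INStruct.Up (M : INStruct W) (s : Set W) : Prop :=
  ∀ ⦃w v : W⦄, M.le w v → w ∈ s → v ∈ s

/-- `M` is an intuitionistic neighbourhood model: the order is a partial order,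
the domain of every neighbourhood is upward closed, and the valuation assigns
upward closed sets to proposition letters. -/
def INStruct.IsModel (M : INStruct W) : Prop :=
  IsPartialOrder W M.le ∧ (∀ a ∈ M.N, M.Up a.dom) ∧ ∀ i, M.Up (M.V i)

/-- Truth of a formula at a world of an intuitionistic neighbourhood model. -/
def INStruct.sat (M : INStruct W) : Formula → W → Prop
  | .prop i, w  => w ∈ M.V i
  | .bot, _     => False
  | .and φ ψ, w => M.sat φ w ∧ M.sat ψ w
  | .or φ ψ, w  => M.sat φ w ∨ M.sat ψ w
  | .imp φ ψ, w => ∀ v, M.le w v → M.sat φ v → M.sat ψ v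
  | .box φ, w   => ∃ a ∈ M.N, w ∈ a.dom ∧
      ∀ w', M.le w w' → ∀ v ∈ a.val w', M.sat φ v
  | .dia φ, w   => ∀ w', M.le w w' → ∀ a ∈ M.N, w' ∈ a.dom →
      ∃ v ∈ a.val w', M.sat φ v

/-- Semantic consequence over the class of all intuitionistic neighbourhood models. -/
def INConseq (Γ : Set Formula) (φ : Formula) : Prop :=
  ∀ (W : Type) (M : INStruct W), M.IsModel →
    ∀ w : W, (∀ ψ ∈ Γ, M.sat ψ w) → M.sat φ w

/-- A coherent intuitionistic neighbourhood: conditions (N1) and (N2). -/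
def INStruct.CoherentNbhd (M : INStruct W) (a : Nbhd W) : Prop :=
  (∀ ⦃w w' : W⦄, M.le w w' → w ∈ a.dom → ∀ v ∈ a.val w, ∃ v' ∈ a.val w', M.le v v') ∧
  (∀ ⦃w : W⦄, w ∈ a.dom → ∀ v ∈ a.val w, ∀ v', M.le v v' →
      ∃ w', M.le w w' ∧ v' ∈ a.val w')

/-- A model is coherent if all its intuitionistic neighbourhoods are coherent. -/
def INStruct.Coherent (M : INStruct W) : Prop := ∀ a ∈ M.N, M.CoherentNbhd a

/-- Semantic consequence over the class of coherent intuitionistic neighbourhood models. -/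
def CohConseq (Γ : Set Formula) (φ : Formula) : Prop :=
  ∀ (W : Type) (M : INStruct W), M.IsModel → M.Coherent →
    ∀ w : W, (∀ ψ ∈ Γ, M.sat ψ w) → M.sat φ w

/-- The relation R: w R v iff v ∈ a(w) for some neighbourhood a of w. -/
def INStruct.R (M : INStruct W) (w v : W) : Prop :=
  ∃ a ∈ M.N, w ∈ a.dom ∧ v ∈ a.val w

/-- R~-Cartesian: w ≤~ v R~ w implies w = v (with ~ the equivalence closures). -/
def INStruct.RCartesian (M : INStruct W) : Prop :=
  ∀ w v, Relation.EqvGen M.le w v → Relation.EqvGen M.R v w → w = v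

/-- N-Cartesian: w R~ v and w, v ∈ dom(a) imply a(w) = a(v). -/
def INStruct.NCartesian (M : INStruct W) : Prop :=
  ∀ a ∈ M.N, ∀ w v, Relation.EqvGen M.R w v → w ∈ a.dom → v ∈ a.dom →
    a.val w = a.val v

/-- Cartesian: both R~-Cartesian and N-Cartesian. -/
def INStruct.Cartesian (M : INStruct W) : Prop := M.RCartesian ∧ M.NCartesian

/-- Isomorphism of intuitionistic neighbourhood structures. -/
def Isomorphic (M : INStruct W) (M' : INStruct W') : Prop :=
  ∃ (α : W → W') (ν : Nbhd W → Nbhd W'),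
    Function.Bijective α ∧ Set.BijOn ν M.N M'.N ∧
    (∀ w v, M.le w v ↔ M'.le (α w) (α v)) ∧
    (∀ a ∈ M.N, ∀ w, w ∈ a.dom ↔ α w ∈ (ν a).dom) ∧
    (∀ a ∈ M.N, ∀ u ∈ a.dom, ∀ w, w ∈ a.val u ↔ α w ∈ (ν a).val (α u)) ∧
    (∀ i w, w ∈ M.V i ↔ α w ∈ M'.V i)

end IMPaper
namespace IMPaper

variable {W : Type}

/-- A neighbourhood path starting at a given world: a list of steps (a, y) such
that each step is taken with a neighbourhood a ∈ N from the current world x,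
with x ∈ dom(a) and y ∈ a(x). -/
def NbdChain (M : INStruct W) : W → List (Nbhd W × W) → Prop
  | _, [] => True
  | x, (a, y) :: rest => a ∈ M.N ∧ x ∈ a.dom ∧ y ∈ a.val x ∧ NbdChain M y rest

/-- An unravelling path starting at s: an order path (a nonempty ≤-chain starting
at s) followed by a neighbourhood path. -/
structure UrPath (M : INStruct W) (s : W) where
  ord : List W
  nbd : List (Nbhd W × W)
  ord_ne : ord ≠ []
  ord_head : ord.head? = some s
  ord_chain : ord.Chain' M.le
  nbd_chain : NbdChain M (ord.getLastD s) nbd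

/-- The last world of the order part of an unravelling path. -/
def UrPath.mid {M : INStruct W} {s : W} (p : UrPath M s) : W := p.ord.getLastD s

/-- The list of worlds w_0, …, w_n of the neighbourhood part of an unravelling path. -/
def UrPath.wlist {M : INStruct W} {s : W} (p : UrPath M s) : List W :=
  p.mid :: p.nbd.map Prod.snd

/-- The last world of an unravelling path. -/
def UrPath.last {M : INStruct W} {s : W} (p : UrPath M s) : W := p.wlist.getLastD s

/-- The order ≤^ur on unravelling paths: the neighbourhood labels coincide, and
there are order paths t_0, …, t_n, all of the same length, connecting the
neighbourhood-part worlds of p pointwise to those of q, with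
q_ord = p_ord ⌢ t_0. -/
def urLe (M : INStruct W) (s : W) (p q : UrPath M s) : Prop :=
  p.nbd.map Prod.fst = q.nbd.map Prod.fst ∧
  ∃ ts : List (List W),
    ts.length = p.nbd.length + 1 ∧
    (∀ t ∈ ts, t ≠ [] ∧ t.Chain' M.le) ∧
    (∀ t ∈ ts, ∀ t' ∈ ts, t.length = t'.length) ∧
    (∀ j : ℕ, (ts.getD j []).head? = p.wlist[j]? ∧
              (ts.getD j []).getLast? = q.wlist[j]?) ∧
    q.ord = p.ord ++ (ts.headI).tail

/-- The intuitionistic neighbourhood a_{w⃗} on unravelling paths: its domain is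
the ≤^ur-upset of w⃗, and a_{w⃗}(v⃗) = { v⃗ : a : x  |  x ∈ a(last v⃗) }. -/
def urNbhd (M : INStruct W) (s : W) (p : UrPath M s) (a : Nbhd W) :
    Nbhd (UrPath M s) where
  dom := {q | urLe M s p q}
  val := fun q => {r | r.ord = q.ord ∧ ∃ x ∈ a.val q.last, r.nbd = q.nbd ++ [(a, x)]}

/-- The unravelling M_s^ur of M from s. -/
def urStruct (M : INStruct W) (s : W) : INStruct (UrPath M s) where
  le := urLe M s
  N := {b | ∃ p : UrPath M s, ∃ a ∈ M.N, p.last ∈ a.dom ∧ b = urNbhd M s p a}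
  V := fun i => {p | p.last ∈ M.V i}

end IMPaper
namespace IMPaper

/-!
The map `last` from the unravelling to `M` is a bounded morphism of intuitionistic
neighbourhood models, and truth is invariant under bounded morphisms. The one clause that
needs coherence is lifting `≤` back along `last`: if `w⃗` ends in `w` and `w ≤ v`, then
(N2), applied backwards along the neighbourhood part of `w⃗`, produces a path with the same
neighbourhood labels that lies pointwise above `w⃗` and ends in `v`; it is `≤^ur`-above `w⃗`,
witnessed by order paths of length two.
-/

variable {W W' : Type}

structure INStruct.IsBoundedMorphism (M : INStruct W) (M' : INStruct W') (f : W → W') :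
    Prop where
  mem_V_iff : ∀ i w, w ∈ M.V i ↔ f w ∈ M'.V i
  le_map : ∀ ⦃w v⦄, M.le w v → M'.le (f w) (f v)
  exists_le_of_le : ∀ ⦃w v'⦄, M'.le (f w) v' → ∃ v, M.le w v ∧ f v = v'
  nbhd_forth : ∀ b ∈ M.N, ∀ w ∈ b.dom, ∃ a ∈ M'.N, f w ∈ a.dom ∧
    ∀ w', M.le w w' → a.val (f w') ⊆ f '' b.val w'
  nbhd_back : ∀ a ∈ M'.N, ∀ w, f w ∈ a.dom → ∃ b ∈ M.N, w ∈ b.dom ∧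
    ∀ w', M.le w w' → f '' b.val w' ⊆ a.val (f w')

namespace INStruct.IsBoundedMorphism

variable {M : INStruct W} {M' : INStruct W'} {f : W → W'} {φ : Formula}

theorem sat_imp_iff (hf : M.IsBoundedMorphism M' f) {ψ : Formula}
    (hφ : ∀ w, M.sat φ w ↔ M'.sat φ (f w)) (hψ : ∀ w, M.sat ψ w ↔ M'.sat ψ (f w)) (w : W) :
    M.sat (φ.imp ψ) w ↔ M'.sat (φ.imp ψ) (f w) := by
  constructor
  · intro h v' hwv' hφv'
    obtain ⟨v, hwv, rfl⟩ := hf.exists_le_of_le hwv'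
    exact (hψ v).1 (h v hwv ((hφ v).2 hφv'))
  · intro h v hwv hφv
    exact (hψ v).2 (h (f v) (hf.le_map hwv) ((hφ v).1 hφv))

theorem sat_box_iff (hf : M.IsBoundedMorphism M' f) (hφ : ∀ w, M.sat φ w ↔ M'.sat φ (f w))
    (w : W) : M.sat φ.box w ↔ M'.sat φ.box (f w) := by
  constructor
  · rintro ⟨b, hb, hwb, hsat⟩
    obtain ⟨a, ha, hwa, hab⟩ := hf.nbhd_forth b hb w hwb
    refine ⟨a, ha, hwa, fun u' hwu' x hx => ?_⟩
    obtain ⟨w', hww', rfl⟩ := hf.exists_le_of_le hwu'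
    obtain ⟨v, hv, rfl⟩ := hab w' hww' hx
    exact (hφ v).1 (hsat w' hww' v hv)
  · rintro ⟨a, ha, hwa, hsat⟩
    obtain ⟨b, hb, hwb, hba⟩ := hf.nbhd_back a ha w hwa
    exact ⟨b, hb, hwb, fun w' hww' v hv =>
      (hφ v).2 (hsat (f w') (hf.le_map hww') (f v) (hba w' hww' ⟨v, hv, rfl⟩))⟩

theorem sat_dia_iff (hf : M.IsBoundedMorphism M' f) (hrefl : Std.Refl M.le)
    (hφ : ∀ w, M.sat φ w ↔ M'.sat φ (f w)) (w : W) :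
    M.sat φ.dia w ↔ M'.sat φ.dia (f w) := by
  constructor
  · intro h u' hwu' a ha hu'a
    obtain ⟨w', hww', rfl⟩ := hf.exists_le_of_le hwu'
    obtain ⟨b, hb, hw'b, hba⟩ := hf.nbhd_back a ha w' hu'a
    obtain ⟨v, hv, hφv⟩ := h w' hww' b hb hw'b
    exact ⟨f v, hba w' (hrefl.refl w') ⟨v, hv, rfl⟩, (hφ v).1 hφv⟩
  · intro h w' hww' b hb hw'b
    obtain ⟨a, ha, hw'a, hab⟩ := hf.nbhd_forth b hb w' hw'b
    obtain ⟨x, hx, hφx⟩ := h (f w') (hf.le_map hww') a ha hw'a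
    obtain ⟨v, hv, rfl⟩ := hab w' (hrefl.refl w') hx
    exact ⟨v, hv, (hφ v).2 hφx⟩

theorem sat_iff (hf : M.IsBoundedMorphism M' f) (hrefl : Std.Refl M.le) :
    ∀ (φ : Formula) (w : W), M.sat φ w ↔ M'.sat φ (f w)
  | .prop i, w => hf.mem_V_iff i w
  | .bot, _ => Iff.rfl
  | .and φ ψ, w => and_congr (hf.sat_iff hrefl φ w) (hf.sat_iff hrefl ψ w)
  | .or φ ψ, w => or_congr (hf.sat_iff hrefl φ w) (hf.sat_iff hrefl ψ w)
  | .imp φ ψ, w => hf.sat_imp_iff (hf.sat_iff hrefl φ) (hf.sat_iff hrefl ψ) w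
  | .box φ, w => hf.sat_box_iff (hf.sat_iff hrefl φ) w
  | .dia φ, w => hf.sat_dia_iff hrefl (hf.sat_iff hrefl φ) w

end INStruct.IsBoundedMorphism

theorem _root_.List.IsChain.rel_of_head?_of_getLast? {α : Type*} {r : α → α → Prop}
    [IsPreorder α r] {l : List α} {x y : α} (hl : l.IsChain r) (hx : l.head? = some x)
    (hy : l.getLast? = some y) : r x y := by
  obtain ⟨t, rfl⟩ := List.head?_eq_some_iff.mp hx
  rw [← Relation.reflTransGen_eq_self (r := r)]
  exact List.relationReflTransGen_of_exists_isChain_cons t hl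
    (Option.some.inj ((List.getLast?_eq_some_getLast _).symm.trans hy))

section NeighbourhoodPaths

variable {M : INStruct W}

theorem nbdChain_append_singleton {m : W} {l : List (Nbhd W × W)} {a : Nbhd W} {x : W} :
    NbdChain M m (l ++ [(a, x)]) ↔
      NbdChain M m l ∧ a ∈ M.N ∧ (l.map Prod.snd).getLastD m ∈ a.dom ∧
        x ∈ a.val ((l.map Prod.snd).getLastD m) := by
  induction l generalizing m with
  | nil => simp [NbdChain]
  | cons step l ih =>
    obtain ⟨b, y⟩ := step
    simp only [List.cons_append, NbdChain, List.map_cons, List.getLastD_cons, ih]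
    tauto

/-- Coherence (N2), applied step by step from the end of the path backwards. -/
theorem NbdChain.exists_lift (hdom : ∀ a ∈ M.N, M.Up a.dom) (hcoh : M.Coherent)
    (l : List (Nbhd W × W)) {m v : W} (hl : NbdChain M m l)
    (hv : M.le ((l.map Prod.snd).getLastD m) v) :
    ∃ (m' : W) (l' : List (Nbhd W × W)), NbdChain M m' l' ∧
      l'.map Prod.fst = l.map Prod.fst ∧
      List.Forall₂ M.le (m :: l.map Prod.snd) (m' :: l'.map Prod.snd) ∧
      (l'.map Prod.snd).getLastD m' = v := by
  induction l using List.reverseRecOn generalizing v with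
  | nil => exact ⟨v, [], trivial, rfl, .cons (by simpa using hv) .nil, rfl⟩
  | append_singleton l step ih =>
    obtain ⟨a, x⟩ := step
    obtain ⟨hl, ha, hdom_a, hx⟩ := nbdChain_append_singleton.mp hl
    simp only [List.map_append, List.map_cons, List.map_nil, List.getLastD_concat] at hv
    obtain ⟨u, hu, hvu⟩ := (hcoh a ha).2 hdom_a x hx v hv
    obtain ⟨m', l', hl', hfst, hle, hlast⟩ := ih hl hu
    refine ⟨m', l' ++ [(a, v)], ?_, by simp [hfst], ?_, by simp⟩
    · rw [nbdChain_append_singleton, hlast]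
      exact ⟨hl', ha, hdom a ha hu hdom_a, hvu⟩
    · simpa only [List.map_append, List.map_cons, List.map_nil, ← List.cons_append] using
        List.rel_append hle (.cons hv .nil)

end NeighbourhoodPaths

section Unravelling

variable {M : INStruct W} {s : W}

namespace UrPath

theorem length_wlist (p : UrPath M s) : p.wlist.length = p.nbd.length + 1 := by
  simp [UrPath.wlist]

theorem last_eq_getLastD_mid (p : UrPath M s) :
    p.last = (p.nbd.map Prod.snd).getLastD p.mid :=
  List.getLastD_cons ..

theorem getElem?_wlist_length (p : UrPath M s) : p.wlist[p.nbd.length]? = some p.last := by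
  have h := List.getLast?_eq_getElem? (l := p.wlist)
  rw [length_wlist, Nat.add_sub_cancel] at h
  rw [← h, last_eq_getLastD_mid, UrPath.wlist, List.getLast?_cons, List.getLastD_eq_getLast?]

theorem last_eq_of_nbd_eq_append {p q : UrPath M s} {a : Nbhd W} {x : W}
    (h : p.nbd = q.nbd ++ [(a, x)]) : p.last = x := by
  rw [last_eq_getLastD_mid, h, List.map_append, List.map_singleton, List.getLastD_concat]

theorem ord_getLast? (p : UrPath M s) : p.ord.getLast? = some p.mid := by
  rw [UrPath.mid, List.getLastD_eq_getLast?, List.getLast?_eq_some_getLast p.ord_ne]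
  rfl

/-- The path `p : a : x`. -/
def snoc (p : UrPath M s) {a : Nbhd W} {x : W} (ha : a ∈ M.N) (hdom : p.last ∈ a.dom)
    (hx : x ∈ a.val p.last) : UrPath M s where
  ord := p.ord
  nbd := p.nbd ++ [(a, x)]
  ord_ne := p.ord_ne
  ord_head := p.ord_head
  ord_chain := p.ord_chain
  nbd_chain := by
    rw [last_eq_getLastD_mid] at hdom hx
    exact nbdChain_append_singleton.mpr ⟨p.nbd_chain, ha, hdom, hx⟩

theorem last_snoc (p : UrPath M s) {a : Nbhd W} {x : W} (ha : a ∈ M.N)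
    (hdom : p.last ∈ a.dom) (hx : x ∈ a.val p.last) : (p.snoc ha hdom hx).last = x :=
  last_eq_of_nbd_eq_append rfl

end UrPath

theorem urLe_of_forall₂ {R : W → W → Prop} (g : W → W → List W) (k : ℕ)
    (hg : ∀ x y, R x y → (g x y).IsChain M.le ∧ (g x y).head? = some x ∧
      (g x y).getLast? = some y ∧ (g x y).length = k)
    {p q : UrPath M s} (hfst : p.nbd.map Prod.fst = q.nbd.map Prod.fst)
    (hR : List.Forall₂ R p.wlist q.wlist) (hord : q.ord = p.ord ++ (g p.mid q.mid).tail) :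
    urLe M s p q := by
  obtain ⟨hlen, hzip⟩ := List.forall₂_iff_zip.mp hR
  set ts := (p.wlist.zip q.wlist).map fun xy => g xy.1 xy.2 with hts
  have hmem : ∀ t ∈ ts, ∃ x y, R x y ∧ t = g x y := by
    simp only [hts, List.mem_map, Prod.exists]
    rintro _ ⟨x, y, hxy, rfl⟩
    exact ⟨x, y, hzip hxy, rfl⟩
  refine ⟨hfst, ts, ?_, fun t ht => ?_, fun t ht t' ht' => ?_, fun j => ?_, ?_⟩
  · simp [hts, ← hlen, UrPath.length_wlist]
  · obtain ⟨x, y, hxy, rfl⟩ := hmem t ht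
    obtain ⟨hc, hx, -⟩ := hg x y hxy
    exact ⟨by rintro h; simp [h] at hx, hc⟩
  · obtain ⟨x, y, hxy, rfl⟩ := hmem t ht
    obtain ⟨x', y', hxy', rfl⟩ := hmem t' ht'
    rw [(hg x y hxy).2.2.2, (hg x' y' hxy').2.2.2]
  · rw [List.getD_eq_getElem?_getD, hts, List.getElem?_map]
    cases h : (p.wlist.zip q.wlist)[j]? with
    | none =>
      simp only [List.getElem?_eq_none_iff, List.length_zip] at h
      simp [List.getElem?_eq_none_iff.mpr (show p.wlist.length ≤ j by omega),
        List.getElem?_eq_none_iff.mpr (show q.wlist.length ≤ j by omega)]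
    | some xy =>
      obtain ⟨hx, hy⟩ := List.getElem?_zip_eq_some.mp h
      obtain ⟨-, hhead, hlast, -⟩ := hg _ _ (hzip (List.mem_of_getElem? h))
      simp [hx, hy, hhead, hlast]
  · simp [hord, hts, UrPath.wlist]

theorem urLe_refl (p : UrPath M s) : urLe M s p p :=
  urLe_of_forall₂ (R := Eq) (fun x _ => [x]) 1
    (fun x _ hxy => ⟨List.isChain_singleton x, rfl, by simp [hxy], rfl⟩) rfl
    (List.forall₂_refl _) (by simp)

theorem urLe.le_last (hle : IsPreorder W M.le) {p q : UrPath M s} (hpq : urLe M s p q) :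
    M.le p.last q.last := by
  obtain ⟨hfst, ts, hlen, hts, -, hends, -⟩ := hpq
  have hnbd : q.nbd.length = p.nbd.length := by simpa using (congrArg List.length hfst).symm
  have hmem : ts.getD p.nbd.length [] ∈ ts := by
    rw [List.getD_eq_getElem?_getD, List.getElem?_eq_getElem (by omega)]
    exact List.getElem_mem _
  obtain ⟨hhead, hlast⟩ := hends p.nbd.length
  rw [UrPath.getElem?_wlist_length] at hhead
  rw [show q.wlist[p.nbd.length]? = some q.last from hnbd ▸ q.getElem?_wlist_length] at hlast
  exact (hts _ hmem).2.rel_of_head?_of_getLast? hhead hlast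

theorem exists_urLe_last_eq (hdom : ∀ a ∈ M.N, M.Up a.dom) (hcoh : M.Coherent)
    (p : UrPath M s) {v : W} (hv : M.le p.last v) : ∃ q, urLe M s p q ∧ q.last = v := by
  rw [UrPath.last_eq_getLastD_mid] at hv
  obtain ⟨m', l', hl', hfst, hle, hlast⟩ := p.nbd_chain.exists_lift hdom hcoh p.nbd hv
  have hmid : M.le p.mid m' := (List.forall₂_cons.mp hle).1
  let q : UrPath M s :=
    { ord := p.ord ++ [m']
      nbd := l'
      ord_ne := by simp
      ord_head := by rw [List.head?_append, p.ord_head]; rfl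
      ord_chain :=
        p.ord_chain.append (List.isChain_singleton m') (by simpa [p.ord_getLast?] using hmid)
      nbd_chain := List.getLastD_concat ▸ hl' }
  have hqmid : q.mid = m' := List.getLastD_concat
  refine ⟨q, urLe_of_forall₂ (fun x y => [x, y]) 2
    (fun x y hxy => ⟨List.isChain_pair.mpr hxy, rfl, rfl, rfl⟩) hfst.symm ?_ ?_, ?_⟩
  · rw [UrPath.wlist, UrPath.wlist, hqmid]
    exact hle
  · simp [q, hqmid]
  · rw [UrPath.last_eq_getLastD_mid, hqmid]
    exact hlast

end Unravelling

theorem isBoundedMorphism_last {M : INStruct W} (hM : M.IsModel) (hcoh : M.Coherent) (s : W) :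
    (urStruct M s).IsBoundedMorphism M UrPath.last where
  mem_V_iff _ _ := Iff.rfl
  le_map _ _ := urLe.le_last hM.1.toIsPreorder
  exists_le_of_le p _ hv := exists_urLe_last_eq hM.2.1 hcoh p hv
  nbhd_forth := by
    rintro _ ⟨p, a, ha, hpa, rfl⟩ q hpq
    have hqa : q.last ∈ a.dom := hM.2.1 a ha (urLe.le_last hM.1.toIsPreorder hpq) hpa
    refine ⟨a, ha, hqa, fun r hqr x hx => ?_⟩
    have hra : r.last ∈ a.dom := hM.2.1 a ha (urLe.le_last hM.1.toIsPreorder hqr) hqa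
    exact ⟨r.snoc ha hra hx, ⟨rfl, x, hx, rfl⟩, r.last_snoc ha hra hx⟩
  nbhd_back := by
    intro a ha p hpa
    refine ⟨urNbhd M s p a, ⟨p, a, ha, hpa, rfl⟩, urLe_refl p, ?_⟩
    rintro q - _ ⟨r, ⟨-, x, hx, hr⟩, rfl⟩
    rw [UrPath.last_eq_of_nbd_eq_append hr]
    exact hx

/-- for a coherent intuitionistic neighbourhood model M and
every unravelling path w⃗ from s, M_s^ur, w⃗ ⊩ φ iff M, last(w⃗) ⊩ φ. -/
theorem unravelling_truth {W : Type} (M : INStruct W) (hM : M.IsModel)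
    (hcoh : M.Coherent) (s : W) :
    ∀ (p : UrPath M s) (φ : Formula),
      (urStruct M s).sat φ p ↔ M.sat φ p.last :=
  fun p φ => (isBoundedMorphism_last hM hcoh s).sat_iff ⟨urLe_refl⟩ φ p

end IMPaper
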